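/- The translation from a legal λD-environment Δ to an Automath book B_Δ — which maps each definition (x₁:A₁,…,xₙ:Aₙ ▷ a(x̄) := M/PN : N) to n assumption lines (chained via indicators ε, x₁, …, x_{n-1}) followed by one definition or primitive line with indicator xₙ — produces a coherent Automath book, provided all introduced variables and constants are renamed to be pairwise distinct. -/
import Mathlib


/-- Content of an Automath line: `---`, `PN`, or a term (abstractly a natural number). -/
inductive Content where
  | dash : Content
  | pn : Content
  | term : ℕ → Content
deriving DecidableEq

/-- An Automath line: indicator (`none` = ε), identifier, content, category. -/
structure Line where
  indicator : Option ℕ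
  identifier : ℕ
  content : Content
  category : ℕ
deriving DecidableEq

abbrev Book := List Line

def Line.isAssum (l : Line) : Bool := l.content == Content.dash
def Line.isPrim (l : Line) : Bool := l.content == Content.pn
def Line.isDefin (l : Line) : Bool := match l.content with | .term _ => true | _ => false

/-- Coherence: identifiers pairwise distinct, and each non-ε indicator is the
identifier of an earlier assumption line. -/
def Coherent (B : Book) : Prop :=
  (B.map Line.identifier).Nodup ∧
  ∀ m : ℕ, ∀ L : Line, B[m]? = some L → ∀ y : ℕ, L.indicator = some y →
    ∃ l : ℕ, l < m ∧ ∃ L' : Line, B[l]? = some L' ∧ L'.identifier = y ∧ L'.isAssum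

/-- Index of the assumption line introducing identifier `y`. -/
def introIdx (B : Book) (y : ℕ) : Option ℕ :=
  B.findIdx? (fun l => l.identifier == y && l.isAssum)

/-- Fuel-based computation of the subject-list γ of the line at index `i`. -/
def gammaAux (B : Book) : ℕ → ℕ → List ℕ
  | 0, i =>
    match B[i]? with
    | none => []
    | some l => [l.identifier]
  | fuel+1, i =>
    match B[i]? with
    | none => []
    | some l =>
      match l.indicator with
      | none => [l.identifier]
      | some y =>
        match introIdx B y with
        | none => [l.identifier]
        | some j => gammaAux B fuel j ++ [l.identifier]

/-- Subject-list γ_z of variable `z` (introduced by an assumption line). γ_ε = []. -/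
def gammaOf (B : Book) (z : ℕ) : List ℕ :=
  match introIdx B z with
  | none => []
  | some i => gammaAux B i i

/-- Fuel-based computation of the typing-context Γ of the line at index `i`. -/
def ctxAux (B : Book) : ℕ → ℕ → List (ℕ × ℕ)
  | 0, i =>
    match B[i]? with
    | none => []
    | some l => [(l.identifier, l.category)]
  | fuel+1, i =>
    match B[i]? with
    | none => []
    | some l =>
      match l.indicator with
      | none => [(l.identifier, l.category)]
      | some y =>
        match introIdx B y with
        | none => [(l.identifier, l.category)]
        | some j => ctxAux B fuel j ++ [(l.identifier, l.category)]

/-- Typing-context Γ_z of variable `z`. Γ_ε = ∅. -/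
def ctxOf (B : Book) (z : ℕ) : List (ℕ × ℕ) :=
  match introIdx B z with
  | none => []
  | some i => ctxAux B i i

/-- Subject-list of an indicator (γ_ε = [] for the empty indicator). -/
def gammaInd (B : Book) : Option ℕ → List ℕ
  | none => []
  | some y => gammaOf B y

/-- Typing-context of an indicator. -/
def ctxInd (B : Book) : Option ℕ → List (ℕ × ℕ)
  | none => []
  | some y => ctxOf B y

/-- y ≺ z : some line of `B` has indicator `y` (≠ ε) and identifier `z`. -/
def Prec (B : Book) (y z : ℕ) : Prop :=
  ∃ L ∈ B, L.indicator = some y ∧ L.identifier = z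

/-- The line at index `i` is a dead-end assumption line. -/
def DeadEnd (B : Book) (i : ℕ) : Prop :=
  ∃ L : Line, B[i]? = some L ∧ L.isAssum ∧
    ∀ j : ℕ, i < j → ∀ L' : Line, B[j]? = some L' → L'.indicator ≠ some L.identifier

/-- One removal step: delete a single dead-end assumption line. -/
def Step (B B' : Book) : Prop := ∃ i : ℕ, DeadEnd B i ∧ B' = B.eraseIdx i

/-- A clean book: coherent with no dead-end assumption lines. -/
def IsClean (B : Book) : Prop := Coherent B ∧ ∀ i : ℕ, ¬ DeadEnd B i

/-- An entry of the λD-environment Δ_B. -/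
structure Entry where
  ctx : List (ℕ × ℕ)
  const : ℕ
  args : List ℕ
  content : Content
  category : ℕ

def Fresh (B : Book) (x : ℕ) : Prop := ∀ L ∈ B, L.identifier ≠ x

def IndOk (B : Book) : Option ℕ → Prop
  | none => True
  | some z => ∃ L ∈ B, L.identifier = z ∧ L.isAssum

/-- Well-formed (ok) books with their translation Δ_B, relative to abstract
typing judgements `J Δ Γ M A` (Δ; Γ ⊢ M : A) and `S Δ Γ A` (Δ; Γ ⊢ A : s). -/
inductive Ok (J : List Entry → List (ℕ × ℕ) → ℕ → ℕ → Prop)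
    (S : List Entry → List (ℕ × ℕ) → ℕ → Prop) : Book → List Entry → Prop
  | nil : Ok J S [] []
  | assum {B : Book} {Δ : List Entry} {ind : Option ℕ} {x A : ℕ} :
      Ok J S B Δ → Fresh B x → IndOk B ind → S Δ (ctxInd B ind) A →
      Ok J S (B ++ [⟨ind, x, Content.dash, A⟩]) Δ
  | defin {B : Book} {Δ : List Entry} {ind : Option ℕ} {c M A : ℕ} :
      Ok J S B Δ → Fresh B c → IndOk B ind → J Δ (ctxInd B ind) M A →
      Ok J S (B ++ [⟨ind, c, Content.term M, A⟩])
        (Δ ++ [⟨ctxInd B ind, c, gammaInd B ind, Content.term M, A⟩])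
  | prim {B : Book} {Δ : List Entry} {ind : Option ℕ} {c A : ℕ} :
      Ok J S B Δ → Fresh B c → IndOk B ind → S Δ (ctxInd B ind) A →
      Ok J S (B ++ [⟨ind, c, Content.pn, A⟩])
        (Δ ++ [⟨ctxInd B ind, c, gammaInd B ind, Content.pn, A⟩])

/-- A λD-environment definition: context, constant, content (term or PN), type. -/
structure Defn where
  ctx : List (ℕ × ℕ)
  const : ℕ
  content : Content
  category : ℕ

/-- The chain of assumption lines for a context, with indicators ε, x₁, x₂, …. -/
def clusterAssums : Option ℕ → List (ℕ × ℕ) → List Line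
  | _, [] => []
  | prev, (x, A) :: rest => ⟨prev, x, Content.dash, A⟩ :: clusterAssums (some x) rest

/-- The last variable of a context (the indicator of the final line). -/
def lastVar (ctx : List (ℕ × ℕ)) : Option ℕ := (ctx.map Prod.fst).getLast?

/-- The cluster of Automath lines corresponding to one λD-definition. -/
def cluster (d : Defn) : List Line :=
  clusterAssums none d.ctx ++ [⟨lastVar d.ctx, d.const, d.content, d.category⟩]

/-- The translation of a λD-environment to an Automath book B_Δ. -/
def transEnv (Δ : List Defn) : Book := (Δ.map cluster).flatten

/-- Local coherence: every non-ε indicator points to an earlier assumption line. -/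
def LocalGood (B : Book) : Prop :=
  ∀ m : ℕ, ∀ L : Line, B[m]? = some L → ∀ y : ℕ, L.indicator = some y →
    ∃ l : ℕ, l < m ∧ ∃ L' : Line, B[l]? = some L' ∧ L'.identifier = y ∧ L'.isAssum

lemma localGood_append {B C : Book} (hB : LocalGood B) (hC : LocalGood C) :
    LocalGood (B ++ C) := by
  intro m L hm y hy
  by_cases h : m < B.length
  · rw [List.getElem?_append_left h] at hm
    obtain ⟨l, hl, L', hL', hid, ha⟩ := hB m L hm y hy
    exact ⟨l, hl, L', by rw [List.getElem?_append_left (hl.trans h)]; exact hL', hid, ha⟩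
  · push_neg at h
    rw [List.getElem?_append_right h] at hm
    obtain ⟨l, hl, L', hL', hid, ha⟩ := hC (m - B.length) L hm y hy
    refine ⟨B.length + l, by omega, L', ?_, hid, ha⟩
    rw [List.getElem?_append_right (by omega)]
    simpa using hL'

lemma clusterAssums_length (prev : Option ℕ) (ctx : List (ℕ × ℕ)) :
    (clusterAssums prev ctx).length = ctx.length := by
  induction ctx generalizing prev with
  | nil => rfl
  | cons p rest ih => cases p; simp [clusterAssums, ih]

lemma clusterAssums_map_id (prev : Option ℕ) (ctx : List (ℕ × ℕ)) :
    (clusterAssums prev ctx).map Line.identifier = ctx.map Prod.fst := by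
  induction ctx generalizing prev with
  | nil => rfl
  | cons p rest ih => cases p; simp [clusterAssums, ih]

lemma clusterAssums_assum {prev : Option ℕ} {ctx : List (ℕ × ℕ)} {L : Line}
    (h : L ∈ clusterAssums prev ctx) : L.isAssum := by
  induction ctx generalizing prev with
  | nil => simp [clusterAssums] at h
  | cons p rest ih =>
    cases p with
    | mk x A =>
      simp only [clusterAssums, List.mem_cons] at h
      rcases h with h | h
      · subst h; rfl
      · exact ih h

lemma clusterAssums_head {prev : Option ℕ} {ctx : List (ℕ × ℕ)} {L : Line}
    (h : (clusterAssums prev ctx)[0]? = some L) : L.indicator = prev := by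
  cases ctx with
  | nil => simp [clusterAssums] at h
  | cons p rest =>
    cases p; simp only [clusterAssums, List.getElem?_cons_zero, Option.some.injEq] at h
    subst h; rfl

lemma clusterAssums_chain {prev : Option ℕ} {ctx : List (ℕ × ℕ)} {k : ℕ} {L : Line}
    (h : (clusterAssums prev ctx)[k + 1]? = some L) {y : ℕ} (hy : L.indicator = some y) :
    ∃ L' : Line, (clusterAssums prev ctx)[k]? = some L' ∧ L'.identifier = y := by
  induction ctx generalizing prev k with
  | nil => simp [clusterAssums] at h
  | cons p rest ih =>
    obtain ⟨x, A⟩ := p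
    simp only [clusterAssums, List.getElem?_cons_succ] at h
    cases k with
    | zero =>
      refine ⟨⟨prev, x, Content.dash, A⟩, by simp [clusterAssums], ?_⟩
      have hx := clusterAssums_head h
      rw [hx] at hy
      exact Option.some_inj.mp hy
    | succ k =>
      obtain ⟨L', hL', hid⟩ := ih h
      exact ⟨L', by simpa [clusterAssums] using hL', hid⟩

lemma cluster_localGood (d : Defn) : LocalGood (cluster d) := by
  intro m L hm y hy
  set n := d.ctx.length with hn
  have hlen : (clusterAssums none d.ctx).length = n := clusterAssums_length _ _
  unfold cluster at hm ⊢
  by_cases h : m < n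
  · rw [List.getElem?_append_left (by omega)] at hm
    cases m with
    | zero =>
      have := clusterAssums_head hm
      rw [this] at hy; cases hy
    | succ k =>
      obtain ⟨L', hL', hid⟩ := clusterAssums_chain hm hy
      refine ⟨k, Nat.lt_succ_self k, L', ?_, hid, ?_⟩
      · rw [List.getElem?_append_left (by omega)]; exact hL'
      · exact clusterAssums_assum (List.mem_of_getElem? hL')
  · push_neg at h
    rw [List.getElem?_append_right (by omega)] at hm
    rw [hlen] at hm
    by_cases hmn : m = n
    · subst hmn
      simp only [Nat.sub_self, List.getElem?_cons_zero, Option.some.injEq] at hm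
      subst hm
      simp only [Line.indicator] at hy
      rcases d.ctx.eq_nil_or_concat with hnil | ⟨ctx', p, hctx⟩
      · rw [hnil] at hy; simp [lastVar] at hy
      · have hn1 : 0 < n := by rw [hn, hctx]; simp
        have hmapid := clusterAssums_map_id none d.ctx
        obtain ⟨L', hL'⟩ : ∃ L', (clusterAssums none d.ctx)[n - 1]? = some L' :=
          ⟨_, List.getElem?_eq_getElem (by omega)⟩
        refine ⟨n - 1, by omega, L', ?_, ?_, clusterAssums_assum (List.mem_of_getElem? hL')⟩
        · rw [List.getElem?_append_left (by omega)]; exact hL'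
        · have h1 : ((clusterAssums none d.ctx).map Line.identifier)[n - 1]? =
              some L'.identifier := by
            rw [List.getElem?_map, hL']; rfl
          rw [hmapid] at h1
          have hlast : lastVar d.ctx = (d.ctx.map Prod.fst)[n - 1]? := by
            unfold lastVar
            rw [List.getLast?_eq_getElem?]
            simp [hn]
          rw [hy, h1] at hlast
          exact (Option.some_inj.mp hlast).symm
    · rw [List.getElem?_eq_none (by simp; omega)] at hm
      cases hm

lemma transEnv_localGood (Δ : List Defn) : LocalGood (transEnv Δ) := by
  induction Δ with
  | nil => intro m L hm; simp [transEnv] at hm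
  | cons d Δ ih =>
    have : transEnv (d :: Δ) = cluster d ++ transEnv Δ := by
      simp [transEnv]
    rw [this]
    exact localGood_append (cluster_localGood d) ih

/-- the translation of a λD-environment (each definition becoming a
chain of assumption lines followed by a definition/primitive line), with all
variables and constants renamed pairwise distinct, is a coherent book. -/
theorem stmt12 (Δ : List Defn)
    (hfresh : ((transEnv Δ).map Line.identifier).Nodup)
    (hdp : ∀ d ∈ Δ, d.content ≠ Content.dash) :
    Coherent (transEnv Δ) := by
  exact ⟨hfresh, transEnv_localGood Δ⟩
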